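/- Let M be an Orlicz function and m ≥ 1, n ≥ 1 integers. Then C_∞(M, Δ_m^n) = { real sequences x = (x_k)_{k≥1} : there exists ρ > 0 with sup_{i≥1} (1/i) Σ_{k=1}^{i} M(|Δ_m^n x_k|/ρ) < ∞ } is a complete metric space with respect to the metric f₂(x,y) = Σ_{r=1}^{mn} |x_r − y_r| + inf{ ρ > 0 : sup_{i≥1} (1/i) Σ_{k=1}^{i} M(|Δ_m^n x_k − Δ_m^n y_k|/ρ) ≤ 1 }. -/

import Mathlib

/-!
Statement 8 (Paper: Proposition 3.2(ii)).  `C_∞(M, Δ_m^n)` is a complete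
metric space with respect to the metric `f₂`.  Sequences are indexed so that
`x k` represents the paper's `x_{k+1}`.
-/

open scoped ENNReal

/-- An Orlicz function. -/
def IsOrliczFunction (M : ℝ → ℝ) : Prop :=
  ContinuousOn M (Set.Ici 0) ∧ MonotoneOn M (Set.Ici 0) ∧ ConvexOn ℝ (Set.Ici 0) M ∧
    M 0 = 0 ∧ (∀ x : ℝ, 0 < x → 0 < M x) ∧ Filter.Tendsto M Filter.atTop Filter.atTop

/-- The generalized difference operator. -/
def delta (m : ℕ) : ℕ → (ℕ → ℝ) → ℕ → ℝ
  | 0, x => x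
  | n + 1, x => fun k => delta m n x k - delta m n x (k + m)

/-- The Cesàro average `(1/i) ∑_{k=1}^{i} M (|x_k| / ρ)`, where `i` here is `i+1`. -/
noncomputable def cesTerm (M : ℝ → ℝ) (x : ℕ → ℝ) (ρ : ℝ) (i : ℕ) : ℝ :=
  (1 / (i + 1 : ℝ)) * ∑ k ∈ Finset.range (i + 1), M (|x k| / ρ)

/-- `sup_{i ≥ 1} (1/i) ∑_{k=1}^{i} M (|x_k| / ρ)`, valued in `ℝ≥0∞`. -/
noncomputable def cesSup (M : ℝ → ℝ) (x : ℕ → ℝ) (ρ : ℝ) : ℝ≥0∞ :=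
  ⨆ i : ℕ, ENNReal.ofReal (cesTerm M x ρ i)

/-- The space `C_∞(M, Δ_m^n)`. -/
def CInftyMDelta (M : ℝ → ℝ) (m n : ℕ) : Set (ℕ → ℝ) :=
  {x | ∃ ρ > 0, cesSup M (delta m n x) ρ < ⊤}

/-- The metric `f₂`. -/
noncomputable def f2 (M : ℝ → ℝ) (m n : ℕ) (x y : ℕ → ℝ) : ℝ :=
  (∑ r ∈ Finset.range (m * n), |x r - y r|) +
    sInf {ρ : ℝ | 0 < ρ ∧ cesSup M (fun k => delta m n x k - delta m n y k) ρ ≤ 1}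

/-!
Write `f₂(x, y) = ∑_{r < mn} |x_r - y_r| + ‖Δ_m^n x - Δ_m^n y‖`, where
`‖z‖ = inf {ρ > 0 : sup_i (1/i) ∑_{k ≤ i} M(|z_k| / ρ) ≤ 1}` is the Luxemburg functional.
Convexity of `M` makes `‖·‖` subadditive, which gives the triangle inequality, and a rescaling
of `ρ` shows that `‖·‖` is finite on differences of elements of the space. Since `M → ∞`, a bound
`‖z‖ ≤ ρ` bounds each `|z_k|` by a multiple of `ρ`; solving the recurrence defining `Δ_m^n` from
the first `mn` coordinates then bounds each `|x_k - y_k|` by a multiple of `f₂(x, y)`. Hence `f₂`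
separates points and an `f₂`-Cauchy sequence converges coordinatewise, and by continuity of `M` the
Cesàro bounds pass to the coordinatewise limit, which therefore lies in the space and is the
`f₂`-limit.
-/

open Finset Filter Topology
open scoped Pointwise

variable {M : ℝ → ℝ}

namespace IsOrliczFunction

lemma mono (hM : IsOrliczFunction M) {a b : ℝ} (ha : 0 ≤ a) (hab : a ≤ b) : M a ≤ M b :=
  hM.2.1 ha (ha.trans hab) hab

lemma nonneg (hM : IsOrliczFunction M) {t : ℝ} (ht : 0 ≤ t) : 0 ≤ M t :=
  hM.2.2.2.1 ▸ hM.mono le_rfl ht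

lemma map_div_le_div (hM : IsOrliczFunction M) {t c : ℝ} (ht : 0 ≤ t) (hc : 1 ≤ c) :
    M (t / c) ≤ M t / c := by
  have hc₀ : 0 < c := one_pos.trans_le hc
  have h := hM.2.2.1.2 (x := t) (y := 0) ht Set.self_mem_Ici (by positivity : (0 : ℝ) ≤ 1 / c)
    (sub_nonneg.2 ((div_le_one hc₀).2 hc)) (add_sub_cancel _ _)
  simp only [smul_eq_mul, mul_zero, add_zero, hM.2.2.2.1] at h
  rwa [one_div_mul_eq_div, one_div_mul_eq_div] at h

lemma map_div_add_le (hM : IsOrliczFunction M) {s a b ρ₁ ρ₂ : ℝ} (hs : 0 ≤ s) (ha : 0 ≤ a)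
    (hb : 0 ≤ b) (hsab : s ≤ a + b) (h₁ : 0 < ρ₁) (h₂ : 0 < ρ₂) :
    M (s / (ρ₁ + ρ₂)) ≤ ρ₁ / (ρ₁ + ρ₂) * M (a / ρ₁) + ρ₂ / (ρ₁ + ρ₂) * M (b / ρ₂) := by
  have hρ : 0 < ρ₁ + ρ₂ := add_pos h₁ h₂
  calc M (s / (ρ₁ + ρ₂)) ≤ M (ρ₁ / (ρ₁ + ρ₂) * (a / ρ₁) + ρ₂ / (ρ₁ + ρ₂) * (b / ρ₂)) := by
        refine hM.mono (by positivity) ?_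
        have hcomb : ρ₁ / (ρ₁ + ρ₂) * (a / ρ₁) + ρ₂ / (ρ₁ + ρ₂) * (b / ρ₂) =
            (a + b) / (ρ₁ + ρ₂) := by
          field_simp
        rw [hcomb]
        gcongr
    _ ≤ _ := hM.2.2.1.2 (div_nonneg ha h₁.le) (div_nonneg hb h₂.le) (by positivity) (by positivity)
        (by field_simp)

end IsOrliczFunction

lemma cesSup_le_one_iff {z : ℕ → ℝ} {ρ : ℝ} : cesSup M z ρ ≤ 1 ↔ ∀ i, cesTerm M z ρ i ≤ 1 := by
  simp [cesSup, ENNReal.ofReal_le_one]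

lemma cesTerm_le_toReal_cesSup {z : ℕ → ℝ} {ρ : ℝ} (h : cesSup M z ρ < ⊤) (i : ℕ) :
    cesTerm M z ρ i ≤ (cesSup M z ρ).toReal :=
  (ENNReal.ofReal_le_iff_le_toReal h.ne).1 (le_iSup (fun i => ENNReal.ofReal (cesTerm M z ρ i)) i)

lemma cesTerm_mul_le (hM : IsOrliczFunction M) (z : ℕ → ℝ) {ρ c : ℝ} (hρ : 0 ≤ ρ) (hc : 1 ≤ c)
    (i : ℕ) : cesTerm M z (c * ρ) i ≤ cesTerm M z ρ i / c := by
  rw [cesTerm, cesTerm, mul_div_assoc, sum_div]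
  gcongr with k
  rw [mul_comm c, ← div_div]
  exact hM.map_div_le_div (div_nonneg (abs_nonneg _) hρ) hc

lemma cesTerm_add_le (hM : IsOrliczFunction M) {s a b : ℕ → ℝ} (hs : ∀ k, |s k| ≤ |a k| + |b k|)
    {ρ₁ ρ₂ : ℝ} (h₁ : 0 < ρ₁) (h₂ : 0 < ρ₂) (i : ℕ) :
    cesTerm M s (ρ₁ + ρ₂) i ≤
      ρ₁ / (ρ₁ + ρ₂) * cesTerm M a ρ₁ i + ρ₂ / (ρ₁ + ρ₂) * cesTerm M b ρ₂ i := by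
  rw [cesTerm, cesTerm, cesTerm]
  calc _ ≤ 1 / (i + 1 : ℝ) * ∑ k ∈ range (i + 1),
        (ρ₁ / (ρ₁ + ρ₂) * M (|a k| / ρ₁) + ρ₂ / (ρ₁ + ρ₂) * M (|b k| / ρ₂)) := by
        gcongr with k
        exact hM.map_div_add_le (abs_nonneg _) (abs_nonneg _) (abs_nonneg _) (hs k) h₁ h₂
    _ = _ := by rw [sum_add_distrib, ← mul_sum, ← mul_sum]; ring

lemma apply_le_of_cesTerm_le_one (hM : IsOrliczFunction M) {z : ℕ → ℝ} {ρ : ℝ} (hρ : 0 ≤ ρ)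
    {k : ℕ} (h : cesTerm M z ρ k ≤ 1) : M (|z k| / ρ) ≤ k + 1 := by
  rw [cesTerm, one_div, inv_mul_le_iff₀ (by positivity), mul_one] at h
  exact (single_le_sum (fun j _ => hM.nonneg (div_nonneg (abs_nonneg (z j)) hρ))
    (self_mem_range_succ k)).trans h

lemma tendsto_cesTerm (hM : IsOrliczFunction M) {ι : Type*} {l : Filter ι} {z : ι → ℕ → ℝ}
    {w : ℕ → ℝ} (hz : ∀ k, Tendsto (fun j => z j k) l (𝓝 (w k))) {ρ : ℝ} (hρ : 0 ≤ ρ) (i : ℕ) :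
    Tendsto (fun j => cesTerm M (z j) ρ i) l (𝓝 (cesTerm M w ρ i)) := by
  have hcont : Continuous fun t => M (|t| / ρ) :=
    hM.1.comp_continuous (continuous_abs.div_const ρ) fun t => div_nonneg (abs_nonneg t) hρ
  exact (tendsto_finsetSum _ fun k _ => (hcont.tendsto _).comp (hz k)).const_mul _

def luxSet (M : ℝ → ℝ) (z : ℕ → ℝ) : Set ℝ := {ρ | 0 < ρ ∧ cesSup M z ρ ≤ 1}

-- `sInf ∅ = 0`, so facts about `lux` need `luxSet` to be nonempty.
noncomputable def lux (M : ℝ → ℝ) (z : ℕ → ℝ) : ℝ := sInf (luxSet M z)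

lemma luxSet_bddBelow (z : ℕ → ℝ) : BddBelow (luxSet M z) := ⟨0, fun _ h => h.1.le⟩

lemma lux_nonneg (z : ℕ → ℝ) : 0 ≤ lux M z := Real.sInf_nonneg fun _ h => h.1.le

lemma lux_le {z : ℕ → ℝ} {ρ : ℝ} (h : ρ ∈ luxSet M z) : lux M z ≤ ρ :=
  csInf_le (luxSet_bddBelow z) h

lemma luxSet_neg (z : ℕ → ℝ) : luxSet M (-z) = luxSet M z := by
  simp only [luxSet, cesSup, cesTerm, Pi.neg_apply, abs_neg]

lemma luxSet_zero (hM : IsOrliczFunction M) : luxSet M 0 = Set.Ioi 0 := by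
  ext ρ
  simp [luxSet, cesSup, cesTerm, hM.2.2.2.1]

lemma lux_zero (hM : IsOrliczFunction M) : lux M 0 = 0 := by
  rw [lux, luxSet_zero hM, csInf_Ioi]

lemma mem_luxSet_of_le (hM : IsOrliczFunction M) {z : ℕ → ℝ} {ρ ρ' : ℝ} (h : ρ ∈ luxSet M z)
    (hle : ρ ≤ ρ') : ρ' ∈ luxSet M z := by
  have hc : 1 ≤ ρ' / ρ := (one_le_div h.1).2 hle
  refine ⟨h.1.trans_le hle, cesSup_le_one_iff.2 fun i => ?_⟩
  calc cesTerm M z ρ' i = cesTerm M z (ρ' / ρ * ρ) i := by rw [div_mul_cancel₀ _ h.1.ne']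
    _ ≤ cesTerm M z ρ i / (ρ' / ρ) := cesTerm_mul_le hM z h.1.le hc i
    _ ≤ 1 := div_le_one_of_le₀ ((cesSup_le_one_iff.1 h.2 i).trans hc) (by positivity)

lemma mem_luxSet_of_lux_lt (hM : IsOrliczFunction M) {z : ℕ → ℝ} (hne : (luxSet M z).Nonempty)
    {ρ : ℝ} (h : lux M z < ρ) : ρ ∈ luxSet M z :=
  let ⟨_, h₀, hlt⟩ := exists_lt_of_csInf_lt hne h
  mem_luxSet_of_le hM h₀ hlt.le

lemma luxSet_nonempty_of_cesSup_lt_top (hM : IsOrliczFunction M) {z : ℕ → ℝ} {ρ : ℝ}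
    (hρ : 0 < ρ) (h : cesSup M z ρ < ⊤) : (luxSet M z).Nonempty := by
  set c := max (cesSup M z ρ).toReal 1
  have hc : 1 ≤ c := le_max_right _ _
  refine ⟨c * ρ, mul_pos (one_pos.trans_le hc) hρ, cesSup_le_one_iff.2 fun i => ?_⟩
  calc cesTerm M z (c * ρ) i ≤ cesTerm M z ρ i / c := cesTerm_mul_le hM z hρ.le hc i
    _ ≤ 1 := div_le_one_of_le₀ ((cesTerm_le_toReal_cesSup h i).trans (le_max_left _ _))
        (zero_le_one.trans hc)

lemma add_mem_luxSet (hM : IsOrliczFunction M) {s a b : ℕ → ℝ} (hs : ∀ k, |s k| ≤ |a k| + |b k|)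
    {ρ₁ ρ₂ : ℝ} (h₁ : ρ₁ ∈ luxSet M a) (h₂ : ρ₂ ∈ luxSet M b) : ρ₁ + ρ₂ ∈ luxSet M s := by
  obtain ⟨hρ₁, h₁⟩ := h₁
  obtain ⟨hρ₂, h₂⟩ := h₂
  refine ⟨add_pos hρ₁ hρ₂, cesSup_le_one_iff.2 fun i => ?_⟩
  calc cesTerm M s (ρ₁ + ρ₂) i
      ≤ ρ₁ / (ρ₁ + ρ₂) * cesTerm M a ρ₁ i + ρ₂ / (ρ₁ + ρ₂) * cesTerm M b ρ₂ i :=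
        cesTerm_add_le hM hs hρ₁ hρ₂ i
    _ ≤ ρ₁ / (ρ₁ + ρ₂) * 1 + ρ₂ / (ρ₁ + ρ₂) * 1 := by
        gcongr
        exacts [cesSup_le_one_iff.1 h₁ i, cesSup_le_one_iff.1 h₂ i]
    _ = 1 := by field_simp

lemma lux_le_add (hM : IsOrliczFunction M) {s a b : ℕ → ℝ} (hs : ∀ k, |s k| ≤ |a k| + |b k|)
    (ha : (luxSet M a).Nonempty) (hb : (luxSet M b).Nonempty) : lux M s ≤ lux M a + lux M b := by
  rw [lux, lux, lux, ← csInf_add ha (luxSet_bddBelow a) hb (luxSet_bddBelow b)]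
  exact csInf_le_csInf (luxSet_bddBelow s) (ha.add hb)
    (Set.add_subset_iff.2 fun _ h₁ _ h₂ => add_mem_luxSet hM hs h₁ h₂)

lemma luxSet_sub_nonempty (hM : IsOrliczFunction M) {a b : ℕ → ℝ} (ha : (luxSet M a).Nonempty)
    (hb : (luxSet M b).Nonempty) : (luxSet M (a - b)).Nonempty :=
  let ⟨_, h₁⟩ := ha
  let ⟨_, h₂⟩ := hb
  ⟨_, add_mem_luxSet hM (fun k => abs_sub (a k) (b k)) h₁ h₂⟩

lemma mem_luxSet_of_tendsto (hM : IsOrliczFunction M) {ι : Type*} {l : Filter ι} [l.NeBot]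
    {z : ι → ℕ → ℝ} {w : ℕ → ℝ} (hz : ∀ k, Tendsto (fun j => z j k) l (𝓝 (w k))) {ρ : ℝ}
    (h : ∀ᶠ j in l, ρ ∈ luxSet M (z j)) : ρ ∈ luxSet M w := by
  obtain ⟨j, hj⟩ := h.exists
  refine ⟨hj.1, cesSup_le_one_iff.2 fun i => ?_⟩
  exact le_of_tendsto (tendsto_cesTerm hM hz hj.1.le i)
    (h.mono fun j hj => cesSup_le_one_iff.1 hj.2 i)

lemma exists_abs_le_mul_lux (hM : IsOrliczFunction M) (K : ℕ) :
    ∃ T > 0, ∀ z : ℕ → ℝ, (luxSet M z).Nonempty → ∀ k < K, |z k| ≤ T * lux M z := by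
  obtain ⟨T, hT⟩ := (hM.2.2.2.2.2.eventually_gt_atTop (K : ℝ)).exists_forall_of_atTop
  have hT₁ : 0 < max T 1 := one_pos.trans_le (le_max_right _ _)
  refine ⟨max T 1, hT₁, fun z hne k hk => ?_⟩
  rw [← div_le_iff₀' hT₁]
  refine le_csInf hne fun ρ hρ => (div_le_iff₀' hT₁).2 (le_of_not_gt fun hlt => ?_)
  have hTρ : T ≤ |z k| / ρ := (le_max_left T 1).trans ((lt_div_iff₀ hρ.1).2 hlt).le
  have hMk := apply_le_of_cesTerm_le_one hM hρ.1.le (cesSup_le_one_iff.1 hρ.2 k)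
  have hkK : (k : ℝ) + 1 ≤ K := by exact_mod_cast hk
  linarith [hT _ hTρ]

section Delta

variable {m : ℕ}

lemma delta_sub (m n : ℕ) (x y : ℕ → ℝ) : delta m n (x - y) = delta m n x - delta m n y := by
  induction n with
  | zero => rfl
  | succ n ih => funext k; simp only [delta, ih, Pi.sub_apply]; ring

lemma delta_succ' (m n : ℕ) (x : ℕ → ℝ) : delta m (n + 1) x = delta m n (delta m 1 x) := by
  induction n with
  | zero => rfl
  | succ n ih => rw [delta, ih]; rfl

lemma tendsto_delta {ι : Type*} {l : Filter ι} {y : ι → ℕ → ℝ} {x : ℕ → ℝ}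
    (h : ∀ k, Tendsto (fun j => y j k) l (𝓝 (x k))) (m n : ℕ) (k : ℕ) :
    Tendsto (fun j => delta m n (y j) k) l (𝓝 (delta m n x k)) := by
  induction n generalizing k with
  | zero => exact h k
  | succ n ih => exact (ih k).sub (ih (k + m))

lemma abs_le_sum_add_sum_delta_one (hm : 0 < m) (z : ℕ → ℝ) (k : ℕ) :
    |z k| ≤ ∑ r ∈ range m, |z r| + ∑ j ∈ range k, |delta m 1 z j| := by
  induction k using Nat.strong_induction_on with
  | _ k ih =>
    rcases lt_or_ge k m with hk | hk
    · exact le_add_of_le_of_nonneg (single_le_sum (fun r _ => abs_nonneg (z r)) (mem_range.2 hk))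
        (sum_nonneg fun _ _ => abs_nonneg _)
    obtain ⟨j, rfl⟩ := Nat.exists_eq_add_of_le' hk
    have hz : z (j + m) = z j - delta m 1 z j := by simp [delta]
    calc |z (j + m)| ≤ |z j| + |delta m 1 z j| := hz ▸ abs_sub _ _
      _ ≤ ∑ r ∈ range m, |z r| + ∑ i ∈ range j, |delta m 1 z i| + |delta m 1 z j| := by
          gcongr; exact ih j (by omega)
      _ ≤ _ := by
          rw [add_assoc, ← sum_range_succ]
          gcongr
          exact hm

lemma sum_abs_delta_one_le (m n : ℕ) (z : ℕ → ℝ) :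
    ∑ r ∈ range (m * n), |delta m 1 z r| ≤ 2 * ∑ r ∈ range (m * (n + 1)), |z r| := by
  have h₁ : ∑ r ∈ range (m * n), |z r| ≤ ∑ r ∈ range (m * (n + 1)), |z r| :=
    sum_le_sum_of_subset_of_nonneg (range_subset_range.2 (Nat.mul_le_mul_left m n.le_succ))
      fun _ _ _ => abs_nonneg _
  have h₂ : ∑ r ∈ range (m * n), |z (r + m)| ≤ ∑ r ∈ range (m * (n + 1)), |z r| := by
    rw [show m * (n + 1) = m + m * n by ring, sum_range_add]
    simp_rw [add_comm m]
    exact le_add_of_nonneg_left (sum_nonneg fun _ _ => abs_nonneg _)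
  calc ∑ r ∈ range (m * n), |delta m 1 z r| ≤ ∑ r ∈ range (m * n), (|z r| + |z (r + m)|) :=
        sum_le_sum fun r _ => abs_sub _ _
    _ ≤ _ := by rw [sum_add_distrib]; linarith

lemma exists_sum_abs_le_mul_sum_delta (hm : 0 < m) (n K : ℕ) : ∃ C ≥ 0, ∀ z : ℕ → ℝ,
    ∑ j ∈ range K, |z j| ≤
      C * (∑ r ∈ range (m * n), |z r| + ∑ j ∈ range K, |delta m n z j|) := by
  induction n with
  | zero => exact ⟨1, zero_le_one, fun z => by simp [delta]⟩
  | succ n ih =>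
    obtain ⟨C, hC, hCz⟩ := ih
    refine ⟨K * (1 + 2 * C), by positivity, fun z => ?_⟩
    set P := ∑ r ∈ range (m * (n + 1)), |z r|
    set D := ∑ j ∈ range K, |delta m (n + 1) z j|
    have hP : 0 ≤ P := sum_nonneg fun _ _ => abs_nonneg _
    have hD : 0 ≤ D := sum_nonneg fun _ _ => abs_nonneg _
    have hzm : ∑ r ∈ range m, |z r| ≤ P :=
      sum_le_sum_of_subset_of_nonneg (range_subset_range.2 (Nat.le_mul_of_pos_right m n.succ_pos))
        fun _ _ _ => abs_nonneg _
    have hw : ∑ j ∈ range K, |delta m 1 z j| ≤ C * (2 * P + D) := by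
      refine (hCz (delta m 1 z)).trans ?_
      rw [← delta_succ']
      gcongr
      exact sum_abs_delta_one_le m n z
    have hz : ∑ j ∈ range K, |z j| ≤
        K * (∑ r ∈ range m, |z r| + ∑ j ∈ range K, |delta m 1 z j|) := by
      calc ∑ j ∈ range K, |z j|
          ≤ ∑ j ∈ range K, (∑ r ∈ range m, |z r| + ∑ i ∈ range K, |delta m 1 z i|) := by
            gcongr with j hj
            refine (abs_le_sum_add_sum_delta_one hm z j).trans ?_
            gcongr
            exact (mem_range.1 hj).le
        _ = _ := by rw [sum_const, card_range, nsmul_eq_mul]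
    calc ∑ j ∈ range K, |z j| ≤ K * (P + C * (2 * P + D)) := hz.trans (by gcongr)
      _ ≤ K * (1 + 2 * C) * (P + D) := by
          rw [mul_assoc]
          gcongr
          nlinarith [mul_nonneg hC hD]

end Delta

section Metric

variable {m n : ℕ}

lemma f2_def (M : ℝ → ℝ) (m n : ℕ) (x y : ℕ → ℝ) :
    f2 M m n x y = ∑ r ∈ range (m * n), |x r - y r| + lux M (delta m n x - delta m n y) := rfl

lemma sum_abs_sub_le_f2 (x y : ℕ → ℝ) : ∑ r ∈ range (m * n), |x r - y r| ≤ f2 M m n x y :=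
  le_add_of_nonneg_right (lux_nonneg _)

lemma lux_le_f2 (x y : ℕ → ℝ) : lux M (delta m n x - delta m n y) ≤ f2 M m n x y :=
  le_add_of_nonneg_left (sum_nonneg fun _ _ => abs_nonneg _)

lemma mem_cInftyMDelta_iff (hM : IsOrliczFunction M) {x : ℕ → ℝ} :
    x ∈ CInftyMDelta M m n ↔ (luxSet M (delta m n x)).Nonempty :=
  ⟨fun ⟨_, hρ, h⟩ => luxSet_nonempty_of_cesSup_lt_top hM hρ h,
    fun ⟨ρ, hρ, h⟩ => ⟨ρ, hρ, h.trans_lt ENNReal.one_lt_top⟩⟩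

lemma luxSet_delta_sub_nonempty (hM : IsOrliczFunction M) {x y : ℕ → ℝ}
    (hx : x ∈ CInftyMDelta M m n) (hy : y ∈ CInftyMDelta M m n) :
    (luxSet M (delta m n x - delta m n y)).Nonempty :=
  luxSet_sub_nonempty hM ((mem_cInftyMDelta_iff hM).1 hx) ((mem_cInftyMDelta_iff hM).1 hy)

lemma f2_self (hM : IsOrliczFunction M) (x : ℕ → ℝ) : f2 M m n x x = 0 := by
  simp [f2_def, lux_zero hM]

lemma f2_comm (x y : ℕ → ℝ) : f2 M m n x y = f2 M m n y x := by
  rw [f2_def, f2_def, ← neg_sub (delta m n y), lux, lux, luxSet_neg]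
  simp_rw [abs_sub_comm (x _)]

lemma f2_triangle (hM : IsOrliczFunction M) {x y z : ℕ → ℝ}
    (hxy : (luxSet M (delta m n x - delta m n y)).Nonempty)
    (hyz : (luxSet M (delta m n y - delta m n z)).Nonempty) :
    f2 M m n x z ≤ f2 M m n x y + f2 M m n y z := by
  rw [f2_def, f2_def, f2_def, add_add_add_comm, ← sum_add_distrib]
  gcongr with r
  · exact abs_sub_le _ _ _
  · exact lux_le_add hM (fun k => abs_sub_le _ _ _) hxy hyz

lemma exists_abs_sub_le_mul_f2 (hM : IsOrliczFunction M) (hm : 0 < m) (n k : ℕ) :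
    ∃ C, ∀ x y : ℕ → ℝ, (luxSet M (delta m n x - delta m n y)).Nonempty →
      |x k - y k| ≤ C * f2 M m n x y := by
  obtain ⟨C, hC, hCz⟩ := exists_sum_abs_le_mul_sum_delta hm n (k + 1)
  obtain ⟨T, hT, hTz⟩ := exists_abs_le_mul_lux hM (k + 1)
  refine ⟨C * (1 + (k + 1) * T), fun x y hne => ?_⟩
  set L := lux M (delta m n x - delta m n y)
  have hL : 0 ≤ L := lux_nonneg _
  have hP : 0 ≤ ∑ r ∈ range (m * n), |x r - y r| := sum_nonneg fun _ _ => abs_nonneg _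
  have hΔ : ∑ j ∈ range (k + 1), |delta m n (x - y) j| ≤ (k + 1) * T * L := by
    rw [delta_sub]
    calc _ ≤ ∑ j ∈ range (k + 1), T * L :=
          sum_le_sum fun j hj => hTz _ hne j (mem_range.1 hj)
      _ = _ := by rw [sum_const, card_range, nsmul_eq_mul]; push_cast; ring
  calc |x k - y k| ≤ ∑ j ∈ range (k + 1), |(x - y) j| :=
        single_le_sum (f := fun j => |(x - y) j|) (fun _ _ => abs_nonneg _) (self_mem_range_succ k)
    _ ≤ C * (∑ r ∈ range (m * n), |x r - y r| + (k + 1) * T * L) :=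
        (hCz (x - y)).trans (mul_le_mul_of_nonneg_left (add_le_add le_rfl hΔ) hC)
    _ ≤ C * (1 + (k + 1) * T) * f2 M m n x y := by
        have hkT : 0 ≤ (k + 1) * T := by positivity
        rw [f2_def]
        nlinarith [mul_nonneg hC (mul_nonneg hkT hP), mul_nonneg hC hL]

lemma eq_of_f2_eq_zero (hM : IsOrliczFunction M) (hm : 0 < m) {x y : ℕ → ℝ}
    (hne : (luxSet M (delta m n x - delta m n y)).Nonempty) (h : f2 M m n x y = 0) : x = y := by
  funext k
  obtain ⟨C, hC⟩ := exists_abs_sub_le_mul_f2 hM hm n k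
  have := hC x y hne
  rw [h, mul_zero] at this
  exact sub_eq_zero.1 (abs_nonpos_iff.1 this)

lemma f2_le_of_tendsto (hM : IsOrliczFunction M) {a x : ℕ → ℝ} {y : ℕ → ℕ → ℝ}
    (hy : ∀ k, Tendsto (fun l => y l k) atTop (𝓝 (x k)))
    (hne : ∀ l, (luxSet M (delta m n a - delta m n (y l))).Nonempty) {ε : ℝ}
    (hε : ∀ᶠ l in atTop, f2 M m n a (y l) < ε) :
    ε ∈ luxSet M (delta m n a - delta m n x) ∧ f2 M m n a x ≤ 2 * ε := by
  have hmem : ε ∈ luxSet M (delta m n a - delta m n x) :=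
    mem_luxSet_of_tendsto hM (fun k => tendsto_const_nhds.sub (tendsto_delta hy m n k))
      (hε.mono fun l hl => mem_luxSet_of_lux_lt hM (hne l) ((lux_le_f2 _ _).trans_lt hl))
  have hsum : ∑ r ∈ range (m * n), |a r - x r| ≤ ε :=
    le_of_tendsto (tendsto_finsetSum _ fun r _ => (tendsto_const_nhds.sub (hy r)).abs)
      (hε.mono fun l hl => ((sum_abs_sub_le_f2 _ _).trans_lt hl).le)
  exact ⟨hmem, by rw [f2_def, two_mul]; exact add_le_add hsum (lux_le hmem)⟩

-- Not an instance: `CInftyMDelta M m n` already carries the subspace uniformity of `ℕ → ℝ`.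
variable (n) in
noncomputable abbrev f2MetricSpace (hM : IsOrliczFunction M) (hm : 0 < m) :
    MetricSpace (CInftyMDelta M m n) where
  dist x y := f2 M m n x y
  dist_self x := f2_self hM x
  dist_comm x y := f2_comm x y
  dist_triangle x y z :=
    f2_triangle hM (luxSet_delta_sub_nonempty hM x.2 y.2) (luxSet_delta_sub_nonempty hM y.2 z.2)
  eq_of_dist_eq_zero {x y} h :=
    Subtype.ext (eq_of_f2_eq_zero hM hm (luxSet_delta_sub_nonempty hM x.2 y.2) h)

theorem completeSpace_f2MetricSpace (hM : IsOrliczFunction M) (hm : 0 < m) :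
    @CompleteSpace _ (f2MetricSpace n hM hm).toUniformSpace := by
  let := f2MetricSpace n hM hm
  refine Metric.complete_of_cauchySeq_tendsto fun u hu => ?_
  have hcoord : ∀ k, ∃ xk, Tendsto (fun j => (u j).1 k) atTop (𝓝 xk) := fun k => by
    obtain ⟨C, hC⟩ := exists_abs_sub_le_mul_f2 hM hm n k
    refine cauchySeq_tendsto_of_complete (cauchySeq_iff_tendsto_dist_atTop_0.2 ?_)
    exact squeeze_zero (fun _ => dist_nonneg)
      (fun p => hC (u p.1) (u p.2) (luxSet_delta_sub_nonempty hM (u p.1).2 (u p.2).2))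
      (mul_zero C ▸ (cauchySeq_iff_tendsto_dist_atTop_0.1 hu).const_mul C)
  choose x hx using hcoord
  have hlim : ∀ ε > 0, ∀ᶠ j in atTop,
      ε ∈ luxSet M (delta m n (u j) - delta m n x) ∧ f2 M m n (u j) x ≤ 2 * ε := fun ε hε => by
    obtain ⟨N, hN⟩ := Metric.cauchySeq_iff.1 hu ε hε
    exact eventually_atTop.2 ⟨N, fun j hj => f2_le_of_tendsto hM hx
      (fun l => luxSet_delta_sub_nonempty hM (u j).2 (u l).2)
      (eventually_atTop.2 ⟨N, fun l hl => hN j hj l hl⟩)⟩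
  obtain ⟨j, hj, -⟩ := (hlim 1 one_pos).exists
  have hx_mem : x ∈ CInftyMDelta M m n := (mem_cInftyMDelta_iff hM).2 <| by
    simpa using luxSet_sub_nonempty hM ((mem_cInftyMDelta_iff hM).1 (u j).2) ⟨1, hj⟩
  refine ⟨⟨x, hx_mem⟩, Metric.tendsto_atTop.2 fun ε hε => ?_⟩
  obtain ⟨N, hN⟩ := eventually_atTop.1 (hlim (ε / 3) (by positivity))
  exact ⟨N, fun j hj => (hN j hj).2.trans_lt (by linarith)⟩

end Metric

theorem CInftyDelta_complete_metric_general (M : ℝ → ℝ) (hM : IsOrliczFunction M)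
    (m n : ℕ) (hm : 1 ≤ m) :
    ∃ inst : MetricSpace (CInftyMDelta M m n),
      (∀ a b : CInftyMDelta M m n, @dist _ inst.toDist a b = f2 M m n a.1 b.1) ∧
        @CompleteSpace _ inst.toUniformSpace :=
  ⟨f2MetricSpace n hM hm, fun _ _ => rfl, completeSpace_f2MetricSpace hM hm⟩

theorem CInftyDelta_complete_metric (M : ℝ → ℝ) (hM : IsOrliczFunction M)
    (m n : ℕ) (hm : 1 ≤ m) (hn : 1 ≤ n) :
    ∃ inst : MetricSpace (CInftyMDelta M m n),
      (∀ a b : CInftyMDelta M m n, @dist _ inst.toDist a b = f2 M m n a.1 b.1) ∧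
        @CompleteSpace _ inst.toUniformSpace :=
  CInftyDelta_complete_metric_general M hM m n hm
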